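/- Let I ⊂ R^k be compact and let H be a class of functions from I to R with ‖h‖_{L²(I)} ≤ M for all h ∈ H. For γ > 0 and an integer R ≥ 1, define E_{R,H,γ} = {Σ_{i=1}^R α_i h_i : h_i ∈ H, Σ_{i=1}^R |α_i| ≤ γ}. Then for any ε_1, ε_2 > 0, the covering number satisfies N(ε_1 + ε_2, E_{R,H,γ}, ‖·‖_{L²(I)}) ≤ { (e(Mγ + 2ε_2)/ε_2) × N(ε_1/γ, H, ‖·‖_{L²(I)}) }^R. -/

import Mathlib

open MeasureTheory
open scoped ENNReal

noncomputable section

/-- The `L²(S)` distance between two functions. -/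
def L2dist {α : Type*} [MeasureSpace α] (S : Set α) (f g : α → ℝ) : ℝ :=
  Real.sqrt (∫ x in S, (f x - g x) ^ 2)

/-- The `ε`-covering number of `T` with respect to the (pseudo-)distance `ρ`: the smallest
cardinality of a finite subset `T' ⊆ T` such that every `t ∈ T` is within distance `ε` of
some `t' ∈ T'`; it is `∞` if no finite cover exists. -/
def covN {β : Type*} (ρ : β → β → ℝ) (ε : ℝ) (T : Set β) : ℝ≥0∞ :=
  sInf ((fun F : Finset β => (F.card : ℝ≥0∞)) ''
    {F : Finset β | ↑F ⊆ T ∧ ∀ t ∈ T, ∃ t' ∈ F, ρ t t' ≤ ε})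

/-!
Cover `H` by a minimal `ε₁/γ`-net `F`, and the `ℓ¹`-ball of radius `γ` in `ℝ^R` by an `r`-net `A`
taken from a maximal `r`-separated set, which has at most `((2γ + r)/r)^R` points by comparing
volumes of balls. Given `f = Σ aᵢ hᵢ`, choose `cᵢ ∈ F` close to `hᵢ` and `b ∈ A` close to `a`; then
`‖Σ aᵢ hᵢ - Σ bᵢ cᵢ‖ ≤ Σ |aᵢ| ‖hᵢ - cᵢ‖ + Σ |aᵢ - bᵢ| ‖cᵢ‖ ≤ ε₁ + r M`, so the `|A| |F|^R`
combinations `Σ bᵢ cᵢ` form an `(ε₁ + ε₂)`-net as soon as `r M ≤ ε₂`.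
-/

lemma covN_le_card {β : Type*} {ρ : β → β → ℝ} {ε : ℝ} {T : Set β} (F : Finset β)
    (hFT : ↑F ⊆ T) (hF : ∀ t ∈ T, ∃ t' ∈ F, ρ t t' ≤ ε) :
    covN ρ ε T ≤ F.card :=
  sInf_le ⟨F, ⟨hFT, hF⟩, rfl⟩

lemma covN_empty {β : Type*} (ρ : β → β → ℝ) (ε : ℝ) : covN ρ ε ∅ = 0 :=
  nonpos_iff_eq_zero.1 <| by simpa using covN_le_card (ρ := ρ) (ε := ε) ∅ (by simp) (by simp)

lemma covN_anti {β : Type*} {ρ : β → β → ℝ} {ε ε' : ℝ} {T : Set β} (hε : ε ≤ ε') :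
    covN ρ ε' T ≤ covN ρ ε T :=
  sInf_le_sInf <| Set.image_mono fun _ hF =>
    ⟨hF.1, fun t ht => (hF.2 t ht).imp fun _ h => ⟨h.1, h.2.trans hε⟩⟩

lemma exists_finset_card_eq_covN {β : Type*} {ρ : β → β → ℝ} {ε : ℝ} {T : Set β}
    (h : covN ρ ε T ≠ ⊤) :
    ∃ F : Finset β, ↑F ⊆ T ∧ (∀ t ∈ T, ∃ t' ∈ F, ρ t t' ≤ ε) ∧ (F.card : ℝ≥0∞) = covN ρ ε T := by
  set G := {F : Finset β | ↑F ⊆ T ∧ ∀ t ∈ T, ∃ t' ∈ F, ρ t t' ≤ ε}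
  have hG : G.Nonempty := Set.nonempty_iff_ne_empty.2 fun hG => h (by simp [covN, G, hG])
  obtain ⟨F, hF, hmin⟩ := (InvImage.wf Finset.card wellFounded_lt).has_min G hG
  refine ⟨F, hF.1, hF.2, le_antisymm (le_sInf ?_) (covN_le_card F hF.1 hF.2)⟩
  rintro _ ⟨F', hF', rfl⟩
  exact Nat.cast_le.2 (not_lt.1 (hmin F' hF'))

theorem MeasureTheory.MemLp.sqrt_integral_sq_eq_norm_toLp {α : Type*} [MeasurableSpace α]
    {μ : Measure α} {f : α → ℝ} (hf : MemLp f 2 μ) :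
    √(∫ x, f x ^ 2 ∂μ) = ‖hf.toLp f‖ := by
  rw [Lp.norm_toLp, hf.eLpNorm_eq_integral_rpow_norm two_ne_zero ENNReal.ofNat_ne_top,
    ENNReal.toReal_ofReal (by positivity), Real.sqrt_eq_rpow]
  norm_num [Real.norm_eq_abs]

theorem MeasureTheory.MemLp.toLp_finset_sum {α E ι : Type*} [MeasurableSpace α]
    [NormedAddCommGroup E] {μ : Measure α} {p : ℝ≥0∞} (s : Finset ι) {f : ι → α → E}
    (hf : ∀ i, MemLp (f i) p μ) :
    (memLp_finsetSum' s fun i _ => hf i).toLp (∑ i ∈ s, f i) = ∑ i ∈ s, (hf i).toLp (f i) := by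
  classical
  induction s using Finset.induction_on with
  | empty => simp [MemLp.toLp_zero]
  | insert i s hi ih =>
    simp_rw [Finset.sum_insert hi]
    rw [MemLp.toLp_add (hf i) (memLp_finsetSum' s fun i _ => hf i), ih]

lemma L2dist_eq_dist_toLp {α : Type*} [MeasureSpace α] {S : Set α} {f g : α → ℝ}
    (hf : MemLp f 2 (volume.restrict S)) (hg : MemLp g 2 (volume.restrict S)) :
    L2dist S f g = dist (hf.toLp f) (hg.toLp g) := by
  rw [dist_eq_norm, ← MemLp.toLp_sub, ← (hf.sub hg).sqrt_integral_sq_eq_norm_toLp]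
  rfl

lemma norm_sum_smul_sub_sum_smul_le {ι E : Type*} [SeminormedAddCommGroup E] [NormedSpace ℝ E]
    (s : Finset ι) (a b : ι → ℝ) {x y : ι → E} {δ M : ℝ}
    (hδ : ∀ i ∈ s, ‖x i - y i‖ ≤ δ) (hM : ∀ i ∈ s, ‖y i‖ ≤ M) :
    ‖∑ i ∈ s, a i • x i - ∑ i ∈ s, b i • y i‖ ≤
      (∑ i ∈ s, |a i|) * δ + (∑ i ∈ s, |a i - b i|) * M := by
  calc ‖∑ i ∈ s, a i • x i - ∑ i ∈ s, b i • y i‖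
      = ‖∑ i ∈ s, (a i • (x i - y i) + (a i - b i) • y i)‖ := by
        simp only [smul_sub, sub_smul, Finset.sum_add_distrib, Finset.sum_sub_distrib]
        abel_nf
    _ ≤ ∑ i ∈ s, (|a i| * δ + |a i - b i| * M) := by
        refine norm_sum_le_of_le s fun i hi => (norm_add_le _ _).trans (add_le_add ?_ ?_) <;>
          rw [norm_smul, Real.norm_eq_abs]
        exacts [mul_le_mul_of_nonneg_left (hδ i hi) (abs_nonneg _),
          mul_le_mul_of_nonneg_left (hM i hi) (abs_nonneg _)]
    _ = _ := by rw [Finset.sum_add_distrib, Finset.sum_mul, Finset.sum_mul]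

lemma L2dist_sum_mul_le {α ι : Type*} [MeasureSpace α] [Fintype ι] {S : Set α}
    {h c : ι → α → ℝ} (hh : ∀ i, MemLp (h i) 2 (volume.restrict S))
    (hc : ∀ i, MemLp (c i) 2 (volume.restrict S)) (a b : ι → ℝ) {δ M : ℝ}
    (hδ : ∀ i, L2dist S (h i) (c i) ≤ δ) (hM : ∀ i, √(∫ x in S, c i x ^ 2) ≤ M) :
    L2dist S (fun x => ∑ i, a i * h i x) (fun x => ∑ i, b i * c i x) ≤
      (∑ i, |a i|) * δ + (∑ i, |a i - b i|) * M := by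
  have hsum (a : ι → ℝ) (f : ι → α → ℝ) : (fun x => ∑ i, a i * f i x) = ∑ i, a i • f i := by
    ext x
    simp [Finset.sum_apply]
  have hah i := (hh i).const_smul (a i)
  have hbc i := (hc i).const_smul (b i)
  rw [hsum, hsum, L2dist_eq_dist_toLp (memLp_finsetSum' _ fun i _ => hah i)
    (memLp_finsetSum' _ fun i _ => hbc i), MemLp.toLp_finset_sum _ hah,
    MemLp.toLp_finset_sum _ hbc, dist_eq_norm]
  refine norm_sum_smul_sub_sum_smul_le (x := fun i => (hh i).toLp (h i))
    (y := fun i => (hc i).toLp (c i)) _ a b (fun i _ => ?_) (fun i _ => ?_)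
  · rw [← dist_eq_norm, ← L2dist_eq_dist_toLp]
    exact hδ i
  · rw [← (hc i).sqrt_integral_sq_eq_norm_toLp]
    exact hM i

section Packing

open Metric
open scoped NNReal

variable {E : Type*} [NormedAddCommGroup E] [NormedSpace ℝ E] [FiniteDimensional ℝ E]
  [MeasurableSpace E] [BorelSpace E]

/-- The disjoint balls of radius `r / 2` around the points of `S` fit in the
ball of radius `γ + r / 2`. -/
lemma card_le_of_isSeparated_of_subset_closedBall {S : Finset E} {x : E} {γ : ℝ} {r : ℝ≥0}
    (hγ : 0 ≤ γ) (hr : 0 < r) (hSx : ↑S ⊆ closedBall x γ) (hS : IsSeparated r (S : Set E)) :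
    (S.card : ℝ) ≤ ((2 * γ + r) / r) ^ Module.finrank ℝ E := by
  set d := Module.finrank ℝ E
  let μ : Measure E := Measure.addHaar
  have hr2 : (0 : ℝ) < r / 2 := by positivity
  have hdisj : (S : Set E).PairwiseDisjoint fun s => closedBall s (r / 2) := fun y hy z hz hyz =>
    closedBall_disjoint_closedBall <| by
      have hryz : (r : ℝ) < dist y z := by
        have : (r : ℝ≥0∞) < edist y z := hS hy hz hyz
        rwa [edist_nndist, ENNReal.coe_lt_coe] at this
      linarith
  have hsub : (⋃ s ∈ S, closedBall s (r / 2)) ⊆ closedBall x (γ + r / 2) :=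
    Set.iUnion₂_subset fun s hs => closedBall_subset_closedBall' <| by
      linarith [mem_closedBall.1 (hSx hs)]
  have key : (S.card : ℝ≥0∞) * (ENNReal.ofReal ((r / 2) ^ d) * μ (closedBall 0 1)) ≤
      ENNReal.ofReal ((γ + r / 2) ^ d) * μ (closedBall 0 1) := by
    calc (S.card : ℝ≥0∞) * (ENNReal.ofReal ((r / 2) ^ d) * μ (closedBall 0 1))
        = ∑ s ∈ S, μ (closedBall s (r / 2)) := by
          simp [d, Measure.addHaar_closedBall' μ _ hr2.le]
      _ = μ (⋃ s ∈ S, closedBall s (r / 2)) :=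
          (measure_biUnion_finset hdisj fun _ _ => measurableSet_closedBall).symm
      _ ≤ μ (closedBall x (γ + r / 2)) := measure_mono hsub
      _ = ENNReal.ofReal ((γ + r / 2) ^ d) * μ (closedBall 0 1) :=
          Measure.addHaar_closedBall' μ x (by positivity)
  rw [← mul_assoc, ENNReal.mul_le_mul_iff_left (measure_closedBall_pos μ 0 one_pos).ne'
    measure_closedBall_lt_top.ne, ← ENNReal.ofReal_natCast, ← ENNReal.ofReal_mul (by positivity),
    ENNReal.ofReal_le_ofReal_iff (by positivity), ← le_div_iff₀ (by positivity), ← div_pow] at key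
  rwa [show (γ + r / 2) / (r / 2) = (2 * γ + r) / r by field_simp] at key

lemma packingNumber_closedBall_le (x : E) {γ : ℝ} {r : ℝ≥0} (hγ : 0 ≤ γ) (hr : 0 < r) :
    packingNumber r (closedBall x γ) ≤ ⌊((2 * γ + r) / r) ^ Module.finrank ℝ E⌋₊ := by
  refine iSup₂_le fun C hCx => iSup_le fun hC => ?_
  by_contra! hlt
  obtain ⟨D, hDC, hD⟩ := Set.exists_subset_encard_eq (Order.add_one_le_of_lt hlt)
  have hDfin : D.Finite := Set.finite_of_encard_eq_coe hD
  have hcard := card_le_of_isSeparated_of_subset_closedBall (S := hDfin.toFinset) hγ hr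
    (by simpa using hDC.trans hCx) (by simpa using hC.subset hDC)
  rw [hDfin.encard_eq_coe_toFinset_card] at hD
  rw [show hDfin.toFinset.card = _ + 1 by exact_mod_cast hD] at hcard
  push_cast at hcard
  linarith [Nat.lt_floor_add_one (((2 * γ + r) / r) ^ Module.finrank ℝ E)]

lemma exists_finset_subset_closedBall_forall_dist_le (x : E) {γ r : ℝ} (hγ : 0 ≤ γ)
    (hr : 0 < r) :
    ∃ A : Finset E, ↑A ⊆ closedBall x γ ∧ (∀ y ∈ closedBall x γ, ∃ b ∈ A, dist y b ≤ r) ∧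
      (A.card : ℝ) ≤ ((2 * γ + r) / r) ^ Module.finrank ℝ E := by
  lift r to ℝ≥0 using hr.le
  have hN := (coveringNumber_le_packingNumber r _).trans (packingNumber_closedBall_le x hγ hr)
  obtain ⟨C, hCx, hCfin, hC, hCcard⟩ :=
    exists_set_encard_eq_coveringNumber (hN.trans_lt (ENat.natCast_lt_top _)).ne
  refine ⟨hCfin.toFinset, by simpa, fun y hy => ?_, ?_⟩
  · obtain ⟨b, hb, hyb⟩ := hC hy
    exact ⟨b, by simpa using hb, edist_le_coe.1 hyb⟩
  · rw [← hCcard, hCfin.encard_eq_coe_toFinset_card, Nat.cast_le] at hN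
    exact (Nat.cast_le.2 hN).trans (Nat.floor_le (by positivity))

end Packing

lemma exists_finset_net_l1Ball (ι : Type*) [Fintype ι] {γ r : ℝ} (hγ : 0 ≤ γ) (hr : 0 < r) :
    ∃ A : Finset (ι → ℝ), (∀ b ∈ A, ∑ i, |b i| ≤ γ) ∧
      (∀ a : ι → ℝ, ∑ i, |a i| ≤ γ → ∃ b ∈ A, ∑ i, |a i - b i| ≤ r) ∧
      (A.card : ℝ) ≤ ((2 * γ + r) / r) ^ Fintype.card ι := by
  classical
  have hnorm (x : PiLp 1 fun _ : ι => ℝ) : ‖x‖ = ∑ i, |x i| := by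
    simp [PiLp.norm_eq_of_L1, Real.norm_eq_abs]
  obtain ⟨A, hA, hcov, hcard⟩ :=
    exists_finset_subset_closedBall_forall_dist_le (E := PiLp 1 fun _ : ι => ℝ) 0 hγ hr
  refine ⟨A.image WithLp.ofLp, ?_, fun a ha => ?_, ?_⟩
  · simp only [Finset.mem_image, forall_exists_index, and_imp, forall_apply_eq_imp_iff₂]
    intro b hb
    simpa [hnorm] using hA hb
  · obtain ⟨b, hb, hab⟩ := hcov (WithLp.toLp 1 a) (by simpa [hnorm] using ha)
    exact ⟨b, Finset.mem_image_of_mem _ hb, by simpa [dist_eq_norm, hnorm] using hab⟩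
  · calc ((A.image WithLp.ofLp).card : ℝ) ≤ A.card := by exact_mod_cast Finset.card_image_le
      _ ≤ _ := by simpa [Module.finrank_eq_card_basis (PiLp.basisFun 1 ℝ ι)] using hcard

def l1Combinations {α : Type*} (H : Set (α → ℝ)) (R : ℕ) (γ : ℝ) : Set (α → ℝ) :=
  {f | ∃ (h : Fin R → α → ℝ) (a : Fin R → ℝ), (∀ i, h i ∈ H) ∧ (∑ i, |a i|) ≤ γ ∧
    f = fun x => ∑ i, a i * h i x}

lemma covN_l1Combinations_le {α : Type*} [MeasureSpace α] {S : Set α} {H : Set (α → ℝ)}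
    {R : ℕ} {γ δ r M : ℝ} (hH : ∀ h ∈ H, MemLp h 2 (volume.restrict S))
    (hM : ∀ h ∈ H, √(∫ x in S, h x ^ 2) ≤ M) (hδ : 0 ≤ δ) (hM₀ : 0 ≤ M)
    {F : Finset (α → ℝ)} (hFH : ↑F ⊆ H) (hF : ∀ h ∈ H, ∃ c ∈ F, L2dist S h c ≤ δ)
    {A : Finset (Fin R → ℝ)} (hAγ : ∀ b ∈ A, ∑ i, |b i| ≤ γ)
    (hA : ∀ a : Fin R → ℝ, ∑ i, |a i| ≤ γ → ∃ b ∈ A, ∑ i, |a i - b i| ≤ r) :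
    covN (L2dist S) (γ * δ + r * M) (l1Combinations H R γ) ≤ A.card * F.card ^ R := by
  classical
  set centers := (A ×ˢ Fintype.piFinset fun _ => F).image
    fun p : (Fin R → ℝ) × (Fin R → α → ℝ) => fun x => ∑ i, p.1 i * p.2 i x
  calc covN (L2dist S) (γ * δ + r * M) (l1Combinations H R γ)
      ≤ centers.card := covN_le_card _ ?_ ?_
    _ ≤ (A ×ˢ Fintype.piFinset fun _ => F).card := Nat.cast_le.2 Finset.card_image_le
    _ = A.card * F.card ^ R := by simp [Finset.card_product, Fintype.card_piFinset]
  · intro f hf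
    obtain ⟨⟨b, c⟩, hbc, rfl⟩ := Finset.mem_image.1 hf
    rw [Finset.mem_product, Fintype.mem_piFinset] at hbc
    exact ⟨c, b, fun i => hFH (hbc.2 i), hAγ b hbc.1, rfl⟩
  · rintro _ ⟨h, a, hhH, ha, rfl⟩
    choose c hcF hc using fun i => hF (h i) (hhH i)
    obtain ⟨b, hbA, hab⟩ := hA a ha
    refine ⟨_, Finset.mem_image.2
      ⟨(b, c), Finset.mem_product.2 ⟨hbA, Fintype.mem_piFinset.2 hcF⟩, rfl⟩, ?_⟩
    calc _ ≤ (∑ i, |a i|) * δ + (∑ i, |a i - b i|) * M :=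
          L2dist_sum_mul_le (fun i => hH _ (hhH i)) (fun i => hH _ (hFH (hcF i))) a b hc
            (fun i => hM _ (hFH (hcF i)))
      _ ≤ γ * δ + r * M := by gcongr

theorem covering_l1_combinations_general {k : ℕ} (I : Set (Fin k → ℝ))
    (H : Set ((Fin k → ℝ) → ℝ)) (M : ℝ)
    (hH : ∀ h ∈ H, MemLp h 2 (volume.restrict I))
    (hM : ∀ h ∈ H, Real.sqrt (∫ x in I, (h x) ^ 2) ≤ M)
    (R : ℕ) (hR : 1 ≤ R) (γ : ℝ) (hγ : 0 < γ)
    (ε₁ ε₂ : ℝ) (hε₁ : 0 < ε₁) (hε₂ : 0 < ε₂) :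
    covN (L2dist I) (ε₁ + ε₂)
        {f | ∃ (h : Fin R → (Fin k → ℝ) → ℝ) (a : Fin R → ℝ),
          (∀ i, h i ∈ H) ∧ (∑ i, |a i|) ≤ γ ∧
          f = fun x => ∑ i, a i * h i x}
      ≤ (ENNReal.ofReal (Real.exp 1 * (M * γ + 2 * ε₂) / ε₂) *
          covN (L2dist I) (ε₁ / γ) H) ^ R := by
  change covN (L2dist I) (ε₁ + ε₂) (l1Combinations H R γ) ≤ _
  rcases H.eq_empty_or_nonempty with rfl | ⟨h₀, hh₀⟩
  · have : l1Combinations (∅ : Set ((Fin k → ℝ) → ℝ)) R γ = ∅ :=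
      Set.eq_empty_of_forall_notMem fun _ ⟨_, _, hh, _⟩ => hh ⟨0, hR⟩
    simp [this, covN_empty]
  have hM₀ : 0 ≤ M := (Real.sqrt_nonneg _).trans (hM h₀ hh₀)
  set K := Real.exp 1 * (M * γ + 2 * ε₂) / ε₂
  by_cases hN : covN (L2dist I) (ε₁ / γ) H = ⊤
  · have hK : 0 < K := by positivity
    rw [hN, ENNReal.mul_top (ENNReal.ofReal_pos.2 hK).ne', ENNReal.top_pow (by omega)]
    exact le_top
  obtain ⟨F, hFH, hF, hFcard⟩ := exists_finset_card_eq_covN hN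
  -- `r M ≤ ε₂`, and `(2γ + r) / r = (2γM + 3ε₂) / ε₂ ≤ K` because `e ≥ 2`
  set r := γ * ε₂ / (γ * M + ε₂)
  have hr : 0 < r := by positivity
  obtain ⟨A, hAγ, hA, hAcard⟩ := exists_finset_net_l1Ball (Fin R) hγ.le hr
  rw [Fintype.card_fin] at hAcard
  have hrM : r * M ≤ ε₂ := by
    rw [div_mul_eq_mul_div, div_le_iff₀ (by positivity)]
    nlinarith
  have hAK : (2 * γ + r) / r ≤ K := by
    have he : 2 ≤ Real.exp 1 := by linarith [Real.add_one_le_exp 1]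
    rw [div_le_div_iff₀ hr hε₂]
    simp only [r]
    field_simp
    nlinarith [mul_nonneg hM₀ hγ.le]
  calc covN (L2dist I) (ε₁ + ε₂) (l1Combinations H R γ)
      ≤ covN (L2dist I) (γ * (ε₁ / γ) + r * M) (l1Combinations H R γ) :=
        covN_anti (by rw [mul_div_cancel₀ _ hγ.ne']; linarith)
    _ ≤ A.card * F.card ^ R :=
        covN_l1Combinations_le hH hM (by positivity) hM₀ hFH hF hAγ hA
    _ ≤ ENNReal.ofReal K ^ R * covN (L2dist I) (ε₁ / γ) H ^ R := by
        rw [hFcard, ← ENNReal.ofReal_natCast, ← ENNReal.ofReal_pow (by positivity)]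
        gcongr
        simpa using hAcard.trans (pow_le_pow_left₀ (by positivity) hAK R)
    _ = _ := (mul_pow _ _ _).symm

/-- **Covering number of `ℓ¹`-bounded linear combinations (Lemma
`cover_linear_combination_l1`).**  For a class `H` of functions in `L²(I)` with norms
bounded by `M`, and `E_{R,H,γ} = {Σ_{i=1}^R α_i h_i : h_i ∈ H, Σ_i |α_i| ≤ γ}`, one has for
all `ε₁, ε₂ > 0`:
`N(ε₁+ε₂, E_{R,H,γ}) ≤ {(e(Mγ + 2ε₂)/ε₂) ⬝ N(ε₁/γ, H)}^R`. -/
theorem covering_l1_combinations {k : ℕ} (I : Set (Fin k → ℝ)) (hI : IsCompact I)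
    (H : Set ((Fin k → ℝ) → ℝ)) (M : ℝ)
    (hH : ∀ h ∈ H, MemLp h 2 (volume.restrict I))
    (hM : ∀ h ∈ H, Real.sqrt (∫ x in I, (h x) ^ 2) ≤ M)
    (R : ℕ) (hR : 1 ≤ R) (γ : ℝ) (hγ : 0 < γ)
    (ε₁ ε₂ : ℝ) (hε₁ : 0 < ε₁) (hε₂ : 0 < ε₂) :
    covN (L2dist I) (ε₁ + ε₂)
        {f | ∃ (h : Fin R → (Fin k → ℝ) → ℝ) (a : Fin R → ℝ),
          (∀ i, h i ∈ H) ∧ (∑ i, |a i|) ≤ γ ∧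
          f = fun x => ∑ i, a i * h i x}
      ≤ (ENNReal.ofReal (Real.exp 1 * (M * γ + 2 * ε₂) / ε₂) *
          covN (L2dist I) (ε₁ / γ) H) ^ R :=
  covering_l1_combinations_general I H M hH hM R hR γ hγ ε₁ ε₂ hε₁ hε₂
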